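/- Let G be a finite simple graph with vertex set V and edge set E, let S ⊆ E, let k be a natural number, and let v, v' be two distinct non-adjacent vertices of G. Suppose C₁, …, C_{k+1} are pairwise disjoint subsets of V ∖ {v, v'} such that for each i: the induced subgraph G[C_i] is connected, no edge of S has both endpoints in C_i, and there exist vertices a_i, b_i ∈ C_i with v a_i ∈ E ∖ S and v' b_i ∈ E ∖ S. Let G' be the graph obtained from G by adding the edge vv' (the set S is unchanged, so vv' ∉ S). Then for every T ⊆ V with |T| ≤ k, the subgraph of G induced on V ∖ T contains no S-cycle if and only if the subgraph of G' induced on V ∖ T contains no S-cycle. -/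

import Mathlib

/-!
An `S`-edge `xy` lies on a cycle of a graph exactly when `x` and `y` stay connected after
deleting `xy` (i.e. `xy` is not a bridge). Take an `S`-cycle of `G'[V ∖ T]`. Since `|T| ≤ k`,
some `Cᵢ` misses `T`, and the path `v aᵢ ⋯ bᵢ v'` through `Cᵢ` uses no edge of `S`, so it
replaces the new edge `vv'` in any walk that avoids the `S`-edge `xy`. Hence `xy` is not a
bridge of `G[V ∖ T]` either, and lies on a cycle there. The converse holds since `G ≤ G'`.
-/

open Function

namespace SimpleGraph

variable {V : Type*} {G : SimpleGraph V}

@[simp]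
lemma spanningCoe_induce_adj {s : Set V} {x y : V} :
    (G.induce s).spanningCoe.Adj x y ↔ G.Adj x y ∧ x ∈ s ∧ y ∈ s := by
  simp [map_adj]

lemma mem_of_mem_edgeSet_spanningCoe_induce {s : Set V} {e : Sym2 V}
    (he : e ∈ (G.induce s).spanningCoe.edgeSet) {z : V} (hz : z ∈ e) : z ∈ s := by
  induction e using Sym2.ind with
  | h x y =>
    obtain ⟨-, hx, hy⟩ := spanningCoe_induce_adj.1 he
    rcases Sym2.mem_iff.1 hz with rfl | rfl <;> assumption

lemma exists_isCycle_support_subset_iff {s : Set V} {e : Sym2 V} :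
    (∃ (u : V) (c : G.Walk u u), c.IsCycle ∧ (∀ z ∈ c.support, z ∈ s) ∧ e ∈ c.edges) ↔
      ∃ (u : V) (c : (G.induce s).spanningCoe.Walk u u), c.IsCycle ∧ e ∈ c.edges := by
  constructor
  · rintro ⟨u, c, hc, hcs, he⟩
    have hedges : ∀ f ∈ c.edges, f ∈ (G.induce s).spanningCoe.edgeSet := by
      intro f hf
      induction f using Sym2.ind with
      | h x y =>
        exact spanningCoe_induce_adj.2 ⟨c.adj_of_mem_edges hf,
          hcs x (c.fst_mem_support_of_mem_edges hf), hcs y (c.snd_mem_support_of_mem_edges hf)⟩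
    exact ⟨u, c.transfer _ hedges, hc.transfer hedges, by rwa [Walk.edges_transfer]⟩
  · rintro ⟨u, c, hc, he⟩
    refine ⟨u, c.mapLe (spanningCoe_induce_le G s), hc.mapLe _, fun z hz => ?_,
      by rwa [Walk.edges_mapLe_eq_edges]⟩
    rw [Walk.support_mapLe_eq_support,
      Walk.mem_support_iff_exists_mem_edges_of_not_nil hc.not_nil] at hz
    obtain ⟨f, hf, hzf⟩ := hz
    exact mem_of_mem_edgeSet_spanningCoe_induce (c.edges_subset_edgeSet hf) hzf

lemma Reachable.of_forall_adj {H : SimpleGraph V} (hGH : ∀ x y, G.Adj x y → H.Reachable x y)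
    {u v : V} (h : G.Reachable u v) : H.Reachable u v := by
  obtain ⟨p⟩ := h
  induction p with
  | nil => rfl
  | cons hadj _ ih => exact (hGH _ _ hadj).trans ih

lemma reachable_of_connected_induce {H : SimpleGraph V} {A : Set V}
    (hA : (G.induce A).Connected) (hGH : ∀ x ∈ A, ∀ y ∈ A, G.Adj x y → H.Adj x y)
    {a b : V} (ha : a ∈ A) (hb : b ∈ A) : H.Reachable a b :=
  (hA ⟨a, ha⟩ ⟨b, hb⟩).map ⟨Subtype.val, fun {x y} h => hGH x x.2 y y.2 h⟩

lemma reachable_induce_deleteEdges_of_connector {s A : Set V} {F : Set (Sym2 V)}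
    (hA : (G.induce A).Connected) (hAs : A ⊆ s) (hAF : ∀ x y, x ∈ A → y ∈ A → s(x, y) ∉ F)
    {v v' a b : V} (hv : v ∈ s) (hv' : v' ∈ s) (ha : a ∈ A) (hb : b ∈ A)
    (hva : G.Adj v a) (hvaF : s(v, a) ∉ F) (hv'b : G.Adj v' b) (hv'bF : s(v', b) ∉ F) :
    ((G.induce s).spanningCoe.deleteEdges F).Reachable v v' := by
  have hab : ((G.induce s).spanningCoe.deleteEdges F).Reachable a b :=
    reachable_of_connected_induce hA
      (fun x hx y hy h => deleteEdges_adj.2 ⟨spanningCoe_induce_adj.2 ⟨h, hAs hx, hAs hy⟩,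
        hAF x y hx hy⟩) ha hb
  have hva' := deleteEdges_adj.2 ⟨spanningCoe_induce_adj.2 ⟨hva, hv, hAs ha⟩, hvaF⟩
  have hv'b' := deleteEdges_adj.2 ⟨spanningCoe_induce_adj.2 ⟨hv'b, hv', hAs hb⟩, hv'bF⟩
  exact hva'.reachable.trans (hab.trans hv'b'.reachable.symm)

lemma Reachable.of_add_edge {G' : SimpleGraph V} {v v' : V}
    (hG' : ∀ a b, G'.Adj a b → G.Adj a b ∨ (a = v ∧ b = v') ∨ (a = v' ∧ b = v))
    {s : Set V} {F : Set (Sym2 V)}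
    (hvv' : v ∈ s → v' ∈ s → ((G.induce s).spanningCoe.deleteEdges F).Reachable v v') {x y : V}
    (h : ((G'.induce s).spanningCoe.deleteEdges F).Reachable x y) :
    ((G.induce s).spanningCoe.deleteEdges F).Reachable x y := by
  refine h.of_forall_adj fun p q hpq => ?_
  obtain ⟨hpq, hpqF⟩ := deleteEdges_adj.1 hpq
  obtain ⟨hpq, hp, hq⟩ := spanningCoe_induce_adj.1 hpq
  rcases hG' p q hpq with h | ⟨rfl, rfl⟩ | ⟨rfl, rfl⟩
  · exact (deleteEdges_adj.2 ⟨spanningCoe_induce_adj.2 ⟨h, hp, hq⟩, hpqF⟩).reachable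
  · exact hvv' hp hq
  · exact (hvv' hq hp).symm

end SimpleGraph

lemma exists_disjoint_of_ncard_lt {V ι : Type*} [Finite ι] {C : ι → Set V}
    (hC : Pairwise (Disjoint on C)) {T : Set V} (hT : T.Finite) (hcard : T.ncard < Nat.card ι) :
    ∃ i, Disjoint (C i) T := by
  by_contra! hmeet
  choose f hfC hfT using fun i => Set.not_disjoint_iff.1 (hmeet i)
  have hinj : Injective f := fun i j hij => by
    by_contra hne
    exact Set.disjoint_left.1 (hC hne) (hfC i) (hij ▸ hfC j)
  have := Set.ncard_le_ncard_of_injOn (s := Set.univ) f (fun i _ => hfT i) hinj.injOn hT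
  rw [Set.ncard_univ] at this
  omega

open SimpleGraph

theorem add_edge_preserves_solutions_general {V : Type} [Fintype V]
    (G : SimpleGraph V) (S : Set (Sym2 V)) (hS : S ⊆ G.edgeSet) (k : ℕ)
    (v v' : V)
    (C : Fin (k + 1) → Set V)
    (hCdisj : ∀ i j, i ≠ j → Disjoint (C i) (C j))
    (hCconn : ∀ i, (G.induce (C i)).Connected)
    (hCS : ∀ i, ∀ x y : V, x ∈ C i → y ∈ C i → s(x, y) ∉ S)
    (hCa : ∀ i, ∃ a ∈ C i, G.Adj v a ∧ s(v, a) ∉ S)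
    (hCb : ∀ i, ∃ b ∈ C i, G.Adj v' b ∧ s(v', b) ∉ S)
    (G' : SimpleGraph V)
    (hG' : ∀ a b : V, G'.Adj a b ↔
      (G.Adj a b ∨ (a = v ∧ b = v') ∨ (a = v' ∧ b = v)))
    (T : Set V) (hT : T.ncard ≤ k) :
    (∀ (w : V) (c : G.Walk w w), c.IsCycle → (∀ x ∈ c.support, x ∉ T) →
        ∀ e ∈ c.edges, e ∉ S) ↔
    (∀ (w : V) (c : G'.Walk w w), c.IsCycle → (∀ x ∈ c.support, x ∉ T) →
        ∀ e ∈ c.edges, e ∉ S) := by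
  have hle : G ≤ G' := fun x y h => (hG' x y).2 (Or.inl h)
  refine ⟨fun hfree w c hc hcT e he heS => ?_, fun hfree w c hc hcT e he =>
    hfree w (c.mapLe hle) (hc.mapLe hle) (by rwa [Walk.support_mapLe_eq_support]) e
      (by rwa [Walk.edges_mapLe_eq_edges])⟩
  induction e using Sym2.ind with | h x y => ?_
  obtain ⟨hxy', hreach'⟩ := adj_and_reachable_delete_edges_iff_exists_cycle.2
    (exists_isCycle_support_subset_iff.1 ⟨w, c, hc, hcT, he⟩)
  obtain ⟨-, hx, hy⟩ := spanningCoe_induce_adj.1 hxy'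
  obtain ⟨i, hiT⟩ := exists_disjoint_of_ncard_lt hCdisj T.toFinite
    (by simpa using Nat.lt_succ_of_le hT)
  obtain ⟨a, ha, hva, hvaS⟩ := hCa i
  obtain ⟨b, hb, hv'b, hv'bS⟩ := hCb i
  have hreach := hreach'.of_add_edge (fun p q => (hG' p q).1) fun hv hv' =>
    (reachable_induce_deleteEdges_of_connector (hCconn i) hiT.subset_compl_right (hCS i)
      hv hv' ha hb hva hvaS hv'b hv'bS).mono (deleteEdges_anti (Set.singleton_subset_iff.2 heS))
  obtain ⟨u, c', hc', hc'T, he'⟩ := exists_isCycle_support_subset_iff.2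
    (adj_and_reachable_delete_edges_iff_exists_cycle.1
      ⟨spanningCoe_induce_adj.2 ⟨hS heS, hx, hy⟩, hreach⟩)
  exact hfree u c' hc' hc'T _ he' heS

/-- Suppose `v ≠ v'` are non-adjacent, and `C₁, …, C_{k+1}` are
pairwise disjoint subsets of `V ∖ {v, v'}`, each inducing a connected subgraph
containing no edge of `S`, each adjacent to `v` and to `v'` via edges not in `S`.
Let `G'` be `G` plus the edge `vv'` (with `vv' ∉ S`). Then for every `T ⊆ V` with
`|T| ≤ k`, `G[V ∖ T]` has no `S`-cycle iff `G'[V ∖ T]` has no `S`-cycle. -/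
theorem add_edge_preserves_solutions {V : Type} [Fintype V]
    (G : SimpleGraph V) (S : Set (Sym2 V)) (hS : S ⊆ G.edgeSet) (k : ℕ)
    (v v' : V) (hne : v ≠ v') (hnadj : ¬ G.Adj v v')
    (C : Fin (k + 1) → Set V)
    (hCdisj : ∀ i j, i ≠ j → Disjoint (C i) (C j))
    (hCv : ∀ i, v ∉ C i ∧ v' ∉ C i)
    (hCconn : ∀ i, (G.induce (C i)).Connected)
    (hCS : ∀ i, ∀ x y : V, x ∈ C i → y ∈ C i → s(x, y) ∉ S)
    (hCa : ∀ i, ∃ a ∈ C i, G.Adj v a ∧ s(v, a) ∉ S)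
    (hCb : ∀ i, ∃ b ∈ C i, G.Adj v' b ∧ s(v', b) ∉ S)
    (G' : SimpleGraph V)
    (hG' : ∀ a b : V, G'.Adj a b ↔
      (G.Adj a b ∨ (a = v ∧ b = v') ∨ (a = v' ∧ b = v)))
    (T : Set V) (hT : T.ncard ≤ k) :
    (∀ (w : V) (c : G.Walk w w), c.IsCycle → (∀ x ∈ c.support, x ∉ T) →
        ∀ e ∈ c.edges, e ∉ S) ↔
    (∀ (w : V) (c : G'.Walk w w), c.IsCycle → (∀ x ∈ c.support, x ∉ T) →
        ∀ e ∈ c.edges, e ∉ S) :=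
  add_edge_preserves_solutions_general G S hS k v v' C hCdisj hCconn hCS hCa hCb G' hG' T hT
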